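/- arXiv:1807.00239 — 2 statements merged into one kernel-verified Lean document; each statement's English description precedes it below -/
import Mathlib

section
/- For every natural number p, the following identity of rational numbers holds: ∑_{j=0}^{p} (-1)^j · (2p)!! / ((2j)!! · (2p-2j+1)!!) = (-1)^p / (2p+1). -/
/-!
Writing `p = m + k`, the partial sum over `j ≤ m` has the closed form
`(-1)^m (2p)!! (2k+1) / ((2m)!! (2k+1)!! (2p+1))`: adding the term `j = m + 1` to the closed form
for `(m, k + 1)` gives the one for `(m + 1, k)`. The identity is the case `k = 0`.
-/

open Finset Nat

theorem sum_range_neg_one_pow_mul_doubleFactorial_div (m k : ℕ) :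
    ∑ j ∈ range (m + 1),
      (-1 : ℚ) ^ j * ((2 * (m + k))‼ : ℚ) / (((2 * j)‼ : ℚ) * ((2 * (m + k) - 2 * j + 1)‼ : ℚ))
      = (-1 : ℚ) ^ m * ((2 * (m + k))‼ : ℚ) * (2 * k + 1) /
          (((2 * m)‼ : ℚ) * ((2 * k + 1)‼ : ℚ) * (2 * (m + k) + 1)) := by
  induction m generalizing k with
  | zero =>
    have : ((2 * k + 1)‼ : ℚ) ≠ 0 := by positivity
    simp only [zero_add, range_one, sum_singleton, pow_zero, one_mul, doubleFactorial, cast_one,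
      mul_zero, tsub_zero, CharP.cast_eq_zero]
    field_simp
  | succ m ih =>
    have hlast : 2 * (m + 1 + k) - 2 * (m + 1) + 1 = 2 * k + 1 := by omega
    have hodd : ((2 * (k + 1) + 1)‼ : ℚ) = (2 * k + 3) * (2 * k + 1)‼ := by
      rw [show 2 * (k + 1) + 1 = 2 * k + 1 + 2 by ring, doubleFactorial_add_two]
      push_cast; ring
    have heven : ((2 * (m + 1))‼ : ℚ) = (2 * m + 2) * (2 * m)‼ := by
      rw [show 2 * (m + 1) = 2 * m + 2 by ring, doubleFactorial_add_two]
      push_cast; ring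
    have hfirst := ih (k + 1)
    rw [show m + (k + 1) = m + 1 + k by ring] at hfirst
    rw [sum_range_succ, hfirst, hlast, hodd, heven]
    have : ((2 * k + 1)‼ : ℚ) ≠ 0 := by positivity
    have : ((2 * m)‼ : ℚ) ≠ 0 := by positivity
    push_cast
    field_simp
    ring

/-- The elementary double factorial identity
`∑_{j=0}^{p} (-1)^j (2p)!! / ((2j)!! (2p-2j+1)!!) = (-1)^p / (2p+1)`. -/
theorem doubleFactorial_alternating_sum (p : ℕ) :
    ∑ j ∈ Finset.range (p + 1),
      ((-1 : ℚ) ^ j * ((2 * p)‼ : ℚ) / (((2 * j)‼ : ℚ) * ((2 * p - 2 * j + 1)‼ : ℚ)))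
      = (-1 : ℚ) ^ p / (2 * p + 1) := by
  have hp : ((2 * p)‼ : ℚ) ≠ 0 := by positivity
  have h := sum_range_neg_one_pow_mul_doubleFactorial_div p 0
  simp only [add_zero] at h
  rw [h]
  simp only [CharP.cast_eq_zero, mul_zero, zero_add, mul_one, doubleFactorial, cast_one, add_zero]
  field_simp
end

section
/- For every integer k ≥ 1 and every integer l with 0 ≤ l ≤ k-1, the following identity of rational numbers holds: ∑_{i=l}^{k-1} (-1)^{i-l} · C(i,l) / (i! · (2k-2i-1)!! · 2^{i-l}) = (-1)^{k-1-l} / (l! · (k-1-l)! · (2k-2l-1) · 2^{k-1-l}), where C(i,l) denotes the binomial coefficient 'i choose l'. -/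
/-!
Writing `m = k - 1 - l` and `i = k - 1 - r`, the summand is `(-1)^m / (l! m! 2^m)` times
`(-1)^r C(m,r) (2r)!!/(2r+1)!!`, so the identity reduces to
`∑_{r ≤ m} (-1)^r C(m,r) (2r)!!/(2r+1)!! = 1/(2m+1)`.
This is the Gregory–Newton expansion `1/(x+m) = ∑_r C(m,r) Δ^r(1/x)` at `x = 1/2`, since
`Δ^r(1/x) = (-1)^r r! / (x(x+1)⋯(x+r))` and `(1/2)(3/2)⋯(r+1/2) = (2r+1)!!/2^(r+1)`.
-/

open Finset Nat Polynomial fwdDiff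

theorem ascPochhammer_succ_eval_left {S : Type*} [CommSemiring S] (n : ℕ) (x : S) :
    (ascPochhammer S (n + 1)).eval x = x * (ascPochhammer S n).eval (x + 1) := by
  simp [ascPochhammer_succ_left, eval_comp]

section Field

variable {K : Type*} [Field K]

theorem ascPochhammer_eval_ne_zero {x : K} (hx : ∀ n : ℕ, x + n ≠ 0) (r : ℕ) :
    (ascPochhammer K r).eval x ≠ 0 := by
  rw [Ne, ascPochhammer_eval_eq_zero_iff]
  rintro ⟨n, -, hn⟩
  exact hx n (by rw [hn, add_neg_cancel])

theorem fwdDiff_iter_inv {x : K} (hx : ∀ n : ℕ, x + n ≠ 0) (r : ℕ) :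
    (Δ_[1])^[r] (fun y : K ↦ y⁻¹) x = (-1) ^ r * r ! / (ascPochhammer K (r + 1)).eval x := by
  induction r generalizing x with
  | zero => simp
  | succ r ih =>
    have hx1 : ∀ n : ℕ, x + 1 + n ≠ 0 := fun n ↦ by
      simpa [add_assoc, add_comm (1 : K)] using hx (n + 1)
    have hleft := ascPochhammer_succ_eval_left (r + 1) x
    have hright := ascPochhammer_succ_eval (r + 1) x
    rw [Function.iterate_succ_apply', fwdDiff, ih hx, ih hx1,
      div_sub_div _ _ (ascPochhammer_eval_ne_zero hx1 _) (ascPochhammer_eval_ne_zero hx _),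
      div_eq_div_iff (mul_ne_zero (ascPochhammer_eval_ne_zero hx1 _)
        (ascPochhammer_eval_ne_zero hx _)) (ascPochhammer_eval_ne_zero hx _)]
    push_cast [factorial_succ, pow_succ] at hright ⊢
    linear_combination (-1) ^ r * (r ! : K) * ((ascPochhammer K (r + 1)).eval x * hleft -
      (ascPochhammer K (r + 1)).eval (x + 1) * hright)

theorem sum_choose_mul_fwdDiff_iter_inv {x : K} (hx : ∀ n : ℕ, x + n ≠ 0) (m : ℕ) :
    ∑ k ∈ range (m + 1), (m.choose k : K) * ((-1) ^ k * k ! / (ascPochhammer K (k + 1)).eval x) =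
      (x + m)⁻¹ := by
  have newton := shift_eq_sum_fwdDiff_iter 1 (fun y : K ↦ y⁻¹) m x
  simp only [nsmul_eq_mul, mul_one] at newton
  rw [newton]
  exact sum_congr rfl fun k _ ↦ by rw [fwdDiff_iter_inv hx]

theorem two_pow_mul_ascPochhammer_eval_half (h2 : (2 : K) ≠ 0) (r : ℕ) :
    2 ^ (r + 1) * (ascPochhammer K (r + 1)).eval 2⁻¹ = ((2 * r + 1)‼ : K) := by
  induction r with
  | zero => simp [h2]
  | succ r ih =>
    rw [ascPochhammer_succ_eval, show 2 * (r + 1) + 1 = 2 * r + 1 + 2 by ring,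
      doubleFactorial_add_two, Nat.cast_mul, ← ih]
    field_simp
    push_cast
    ring

variable [CharZero K]

theorem alternating_sum_choose_mul_doubleFactorial_div_doubleFactorial (m : ℕ) :
    ∑ k ∈ range (m + 1), (-1) ^ k * (m.choose k : K) * ((2 * k)‼ / (2 * k + 1)‼) =
      1 / (2 * m + 1) := by
  have h2 : (2 : K) ≠ 0 := two_ne_zero
  have hhalf : ∀ n : ℕ, (2⁻¹ : K) + n ≠ 0 := fun n ↦ by
    rw [← mul_ne_zero_iff_right h2, add_mul, inv_mul_cancel₀ h2]
    exact_mod_cast (show 1 + n * 2 ≠ 0 by omega)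
  have hterm : ∀ k ∈ range (m + 1),
      (m.choose k : K) * ((-1) ^ k * k ! / (ascPochhammer K (k + 1)).eval 2⁻¹) =
        2 * ((-1) ^ k * (m.choose k : K) * ((2 * k)‼ / (2 * k + 1)‼)) := fun k _ ↦ by
    have hP : (ascPochhammer K (k + 1)).eval 2⁻¹ = (2 * k + 1)‼ / 2 ^ (k + 1) := by
      rw [eq_div_iff (pow_ne_zero _ h2), mul_comm]
      exact two_pow_mul_ascPochhammer_eval_half h2 k
    rw [hP, doubleFactorial_two_mul]
    field_simp
    push_cast
    ring
  have hsum := sum_choose_mul_fwdDiff_iter_inv hhalf m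
  rw [sum_congr rfl hterm, ← mul_sum] at hsum
  have htwo_mul : (2 * m + 1 : K) = 2 * (2⁻¹ + m) := by
    rw [mul_add, mul_inv_cancel₀ h2, add_comm]
  rw [htwo_mul, one_div, mul_inv, ← hsum, inv_mul_cancel_left₀ h2]

theorem neg_one_pow_mul_add_choose_div_eq_mul_doubleFactorial_div (l j r : ℕ) (d : K) :
    (-1) ^ j * ((l + j).choose l : K) / ((l + j)! * d * 2 ^ j) =
      (-1) ^ (j + r) / (l ! * (j + r)! * 2 ^ (j + r)) *
        ((-1) ^ r * ((j + r).choose r : K) * ((2 * r)‼ / d)) := by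
  rw [Nat.cast_add_choose, Nat.cast_choose K le_add_self, Nat.add_sub_cancel,
    doubleFactorial_two_mul]
  field_simp [(l + j).factorial_ne_zero, (j + r).factorial_ne_zero, r.factorial_ne_zero]
  push_cast
  have hsign : (-1 : K) ^ (j + r) * (-1) ^ r = (-1) ^ j := by
    rw [pow_add, mul_assoc, ← pow_add, ← two_mul, pow_mul, neg_one_sq, one_pow, mul_one]
  rw [mul_assoc (2 ^ j), hsign]
  ring

end Field

theorem sum_Icc_add_eq_sum_range_reflect {M : Type*} [AddCommMonoid M] (f : ℕ → M) (l m : ℕ) :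
    ∑ i ∈ Icc l (l + m), f i = ∑ r ∈ range (m + 1), f (l + (m - r)) := by
  rw [← Ico_add_one_right_eq_Icc, sum_Ico_eq_sum_range, ← sum_range_reflect]
  simp only [show l + m + 1 - l = m + 1 by omega, add_tsub_cancel_right]

/-- The coefficient identity matching the pull-back of Chern's transgression with
the boundary integrand:
`∑_{i=l}^{k-1} (-1)^{i-l} C(i,l) / (i! (2k-2i-1)!! 2^{i-l})
  = (-1)^{k-1-l} / (l! (k-1-l)! (2k-2l-1) 2^{k-1-l})`. -/
theorem chern_transgression_coefficient_identity (k l : ℕ) (hk : 1 ≤ k) (hl : l ≤ k - 1) :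
    ∑ i ∈ Finset.Icc l (k - 1),
      ((-1 : ℚ) ^ (i - l) * (i.choose l : ℚ) /
        ((i.factorial : ℚ) * ((2 * k - 2 * i - 1)‼ : ℚ) * 2 ^ (i - l)))
      = (-1 : ℚ) ^ (k - 1 - l) /
        ((l.factorial : ℚ) * ((k - 1 - l).factorial : ℚ) * ((2 * k - 2 * l - 1 : ℕ) : ℚ)
          * 2 ^ (k - 1 - l)) := by
  obtain ⟨m, rfl⟩ : ∃ m, k = l + m + 1 := ⟨k - 1 - l, by omega⟩
  rw [show 2 * (l + m + 1) - 2 * l - 1 = 2 * m + 1 by omega]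
  simp only [add_tsub_cancel_right, add_tsub_cancel_left]
  calc _ = ∑ r ∈ range (m + 1), (-1) ^ m / (l ! * m ! * 2 ^ m : ℚ) *
        ((-1) ^ r * (m.choose r : ℚ) * ((2 * r)‼ / (2 * r + 1)‼)) := by
        rw [sum_Icc_add_eq_sum_range_reflect]
        refine sum_congr rfl fun r hr ↦ ?_
        have hrm : r ≤ m := mem_range_succ_iff.1 hr
        rw [Nat.add_sub_cancel_left,
          show 2 * (l + m + 1) - 2 * (l + (m - r)) - 1 = 2 * r + 1 by omega,
          neg_one_pow_mul_add_choose_div_eq_mul_doubleFactorial_div l (m - r) r,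
          Nat.sub_add_cancel hrm]
    _ = _ := by
        rw [← mul_sum, alternating_sum_choose_mul_doubleFactorial_div_doubleFactorial]
        push_cast
        field_simp
end
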